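/- arXiv:2004.12721 — 3 statements merged into one kernel-verified Lean document; each statement's English description precedes it below -/
import Mathlib

section
/- Let V₁, P, Q, V₂ be four distinct collinear points of ℝ², with P in the open segment from V₁ to Q and Q in the open segment from P to V₂, and let F : [0,∞)×[0,∞) → ℝ satisfy conditions (i)–(iv): (i) F is symmetric and C^∞; (ii) ∂F/∂b is nonzero at (dist(P,V₁), dist(P,V₂)) and at (dist(Q,V₁), dist(Q,V₂)); (iii) ∂F/∂a is nonzero at these same two points; (iv) for every natural number n, ((∂F/∂a at (dist(Q,V₁),dist(Q,V₂)) · ∂F/∂b at (dist(P,V₁),dist(P,V₂))) / (∂F/∂a at (dist(P,V₁),dist(P,V₂)) · ∂F/∂b at (dist(Q,V₁),dist(Q,V₂))))^n ≠ (dist(V₂,Q)·dist(V₁,P))/(dist(V₂,P)·dist(V₁,Q)). If K is an analytic solution of the interior F-chordal problem with interior F-chordal points P, Q and vertices V₁, V₂, then for every analytic map γ : (−ε,ε) → ℝ² with γ(0) = V₁, γ′(0) ≠ 0 and image a relatively open neighbourhood of V₁ in c = frontier K, the tangent vector γ′(0) is perpendicular to the vector V₂ − V₁ (the tangent line of c at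 each vertex is perpendicular to the axis). -/
open Set

noncomputable section

/-- The Euclidean plane. -/
abbrev Plane := EuclideanSpace ℝ (Fin 2)

/-- `P` is an interior `F`-chordal point of the curve `c`. -/
def IsChordalPoint (F : ℝ → ℝ → ℝ) (c : Set Plane) (P : Plane) : Prop :=
  ∃ k : ℝ, ∀ A B : Plane, A ∈ c → B ∈ c → P ∈ openSegment ℝ A B →
    F (dist A P) (dist B P) = k

/-- `c` is analytic: every point of `c` has a regular analytic local parametrization
whose image is a relatively open neighbourhood of the point in `c`. -/
def IsAnalyticBoundary (c : Set Plane) : Prop :=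
  ∀ p ∈ c, ∃ ε : ℝ, 0 < ε ∧ ∃ γ : ℝ → Plane,
    AnalyticOnNhd ℝ γ (Ioo (-ε) ε) ∧ γ 0 = p ∧ deriv γ 0 ≠ 0 ∧
    ∃ U : Set Plane, IsOpen U ∧ p ∈ U ∧ γ '' Ioo (-ε) ε = c ∩ U

/-- `K` is an analytic solution of the interior `F`-chordal problem with interior
`F`-chordal points `P, Q` and vertices `V₁, V₂`. -/
def IsAnalyticSolution (F : ℝ → ℝ → ℝ) (P Q V₁ V₂ : Plane) (K : Set Plane) : Prop :=
  IsCompact K ∧ Convex ℝ K ∧ (interior K).Nonempty ∧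
  P ∈ interior K ∧ Q ∈ interior K ∧
  IsChordalPoint F (frontier K) P ∧ IsChordalPoint F (frontier K) Q ∧
  (affineSpan ℝ ({P, Q} : Set Plane) : Set Plane) ∩ frontier K = {V₁, V₂} ∧
  IsAnalyticBoundary (frontier K)

/-- Partial derivative of `F` with respect to the first variable. -/
def Fa (F : ℝ → ℝ → ℝ) (x y : ℝ) : ℝ := deriv (fun a => F a y) x

/-- Partial derivative of `F` with respect to the second variable. -/
def Fb (F : ℝ → ℝ → ℝ) (x y : ℝ) : ℝ := deriv (fun b => F x b) y

/-!
Let `u = γ'(0)`, let `w` be the tangent of a regular analytic chart `δ` at `V₂`, `D = V₂ - V₁`, and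
let `ω` be an area form of the plane. For an interior chordal point `R` on the axis, the implicit
function theorem applied to `ω (γ t - R) (δ s - R) = 0` yields `s(t)` such that the chord through
`γ t` and `R` ends at `δ (s t)`; it applies because `ω D w ≠ 0`: `K` lies on one side of a
supporting line at `V₂`, which therefore contains `w` but not the axis. Differentiating the
constant `F |γ t - R| |δ (s t) - R|` at `t = 0` gives
  `|V₁ R| F_a ω(D, w) ⟪u, D⟫ = |V₂ R| F_b ω(u, D) ⟪w, D⟫`.
If `⟪u, D⟫ ≠ 0`, the relations for `R = P` and `R = Q` have the same nonzero unknown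
`ω(D, w) ⟪u, D⟫`, so their determinant vanishes, which is the equality excluded by (iv) for `n = 1`.
-/

open Filter Topology RealInnerProductSpace

theorem exists_sub_eq_smul_of_mem_openSegment {E : Type*} [AddCommGroup E] [Module ℝ E]
    {x y z : E} (h : z ∈ openSegment ℝ x y) :
    ∃ a b : ℝ, 0 < a ∧ 0 < b ∧ x - z = -b • (y - x) ∧ y - z = a • (y - x) := by
  obtain ⟨a, b, ha, hb, hab, rfl⟩ := h
  refine ⟨a, b, ha, hb, ?_, ?_⟩
  · rw [show a = 1 - b by linarith]; module
  · rw [show b = 1 - a by linarith]; module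

theorem mem_openSegment_trans_expand {E : Type*} [AddCommGroup E] [Module ℝ E] {V₁ P Q V₂ : E}
    (hP : P ∈ openSegment ℝ V₁ Q) (hQ : Q ∈ openSegment ℝ P V₂) (hV₁Q : V₁ ≠ Q) (hPV₂ : P ≠ V₂) :
    P ∈ openSegment ℝ V₁ V₂ ∧ Q ∈ openSegment ℝ V₁ V₂ := by
  simp only [openSegment_eq_image_lineMap] at hP hQ ⊢
  have h₁ : Sbtw ℝ V₁ P Q := sbtw_iff_mem_image_Ioo_and_ne.2 ⟨hP, hV₁Q⟩
  have h₂ : Sbtw ℝ P Q V₂ := sbtw_iff_mem_image_Ioo_and_ne.2 ⟨hQ, hPV₂⟩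
  exact ⟨(h₁.trans_expand_left h₂).mem_image_Ioo, (h₁.trans_expand_right h₂).mem_image_Ioo⟩

theorem HasDerivAt.dist_const {E : Type*} [NormedAddCommGroup E] [InnerProductSpace ℝ E]
    {c : ℝ → E} {v R : E} {t : ℝ} (hc : HasDerivAt c v t) (h : c t ≠ R) :
    HasDerivAt (fun s => dist (c s) R) (⟪c t - R, v⟫ / dist (c t) R) t := by
  have hsq := (hc.sub_const R).norm_sq
  have hpos : ‖c t - R‖ ^ 2 ≠ 0 := by simpa [sub_eq_zero] using h
  convert hsq.sqrt hpos using 1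
  · ext s; simp [dist_eq_norm, Real.sqrt_sq (norm_nonneg _)]
  · rw [Real.sqrt_sq (norm_nonneg _), dist_eq_norm]
    have : ‖c t - R‖ ≠ 0 := by simpa [sub_eq_zero] using h
    field_simp

theorem HasDerivAt.dist_const_of_sub_eq_smul {E : Type*} [NormedAddCommGroup E]
    [InnerProductSpace ℝ E] {c : ℝ → E} {v R D : E} {a t : ℝ} (hc : HasDerivAt c v t) (ha : 0 < a)
    (hD : D ≠ 0) (h : c t - R = a • D) :
    HasDerivAt (fun s => dist (c s) R) (⟪D, v⟫ / ‖D‖) t := by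
  convert hc.dist_const (sub_ne_zero.1 (h ▸ smul_ne_zero ha.ne' hD)) using 1
  rw [dist_eq_norm, h, real_inner_smul_left, norm_smul, Real.norm_of_nonneg ha.le,
    mul_div_mul_left _ _ ha.ne']

theorem HasStrictFDerivAt.exists_implicit_hasDerivAt {g : ℝ × ℝ → ℝ} {g' : ℝ × ℝ →L[ℝ] ℝ}
    {p : ℝ × ℝ} (hg : HasStrictFDerivAt g g' p) (h₂ : g' (0, 1) ≠ 0) :
    ∃ (s : ℝ → ℝ) (σ : ℝ), s p.1 = p.2 ∧ HasDerivAt s σ p.1 ∧ g' (1, σ) = 0 ∧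
      ∀ᶠ t in 𝓝 p.1, g (t, s t) = g p := by
  have hinv : (g' ∘L .inr ℝ ℝ ℝ).IsInvertible :=
    ⟨ContinuousLinearEquiv.unitsEquivAut ℝ (Units.mk0 _ h₂), ContinuousLinearMap.ext_ring (by simp)⟩
  set s := hg.implicitFunctionOfProdDomain hinv
  have hs := (hg.hasStrictFDerivAt_implicitFunctionOfProdDomain hinv).hasStrictDerivAt.hasDerivAt
  have hs0 : s p.1 = p.2 :=
    ((hg.eventually_apply_eq_iff_implicitFunctionOfProdDomain hinv).self_of_nhds).1 rfl
  have hgs := hg.eventually_apply_implicitFunctionOfProdDomain hinv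
  refine ⟨s, _, hs0, hs, ?_, hgs⟩
  have hcurve : HasDerivAt (fun t => g (t, s t)) (g' (1, _)) p.1 :=
    hg.hasFDerivAt.comp_hasDerivAt_of_eq p.1 ((hasDerivAt_id _).prodMk hs) (by rw [hs0])
  exact hcurve.unique ((hasDerivAt_const _ (g p)).congr_of_eventuallyEq hgs)

theorem Convex.exists_tangent_functional {E : Type*} [NormedAddCommGroup E] [NormedSpace ℝ E]
    {K : Set E} (hK : Convex ℝ K) {R V w : E} (hR : R ∈ interior K) (hV : V ∉ interior K)
    {δ : ℝ → E} (hδ : HasDerivAt δ w 0) (hδ0 : δ 0 = V) (hδK : ∀ᶠ t in 𝓝 0, δ t ∈ K) :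
    ∃ f : StrongDual ℝ E, f w = 0 ∧ f R < f V := by
  obtain ⟨f, hf⟩ := geometric_hahn_banach_open_point hK.interior isOpen_interior hV
  have hle : ∀ x ∈ K, f x ≤ f V := by
    have : closure (interior K) ⊆ {x | f x ≤ f V} :=
      closure_minimal (fun x hx => (hf x hx).le) (isClosed_le f.continuous continuous_const)
    rw [hK.closure_interior_eq_closure_of_nonempty_interior ⟨R, hR⟩] at this
    exact fun x hx => this (subset_closure hx)
  have hmax : IsLocalMax (fun t => f (δ t)) 0 := hδK.mono fun t ht => by
    simpa [hδ0] using hle _ ht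
  exact ⟨f, hmax.hasDerivAt_eq_zero (f.hasFDerivAt.comp_hasDerivAt 0 hδ), hf R hR⟩

namespace Orientation

variable {E : Type*} [NormedAddCommGroup E] [InnerProductSpace ℝ E] [Fact (Module.finrank ℝ E = 2)]
  (o : Orientation ℝ E (Fin 2))

local notation "ω" => o.areaForm

theorem smul_eq_inner_smul_of_areaForm_eq_zero {x y : E} (h : ω x y = 0) :
    ‖x‖ ^ 2 • y = ⟪x, y⟫ • x := by
  refine ext_inner_left ℝ fun z => ?_
  have key := o.inner_mul_inner_add_areaForm_mul_areaForm x y z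
  rw [h, zero_mul, add_zero] at key
  rw [real_inner_smul_right, real_inner_smul_right, real_inner_comm y z, real_inner_comm x z]
  linarith

theorem mem_openSegment_of_areaForm_eq_zero_of_inner_neg {A B R : E} (h : ω (A - R) (B - R) = 0)
    (hneg : ⟪A - R, B - R⟫ < 0) : R ∈ openSegment ℝ A B := by
  have hA : A - R ≠ 0 := fun h0 => by simp [h0] at hneg
  have hB : B - R ≠ 0 := fun h0 => by simp [h0] at hneg
  have hinner : ⟪A - R, B - R⟫ = -(‖A - R‖ * ‖B - R‖) := by
    have hsq := o.inner_sq_add_areaForm_sq (A - R) (B - R)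
    rw [h] at hsq
    nlinarith [mul_nonneg (norm_nonneg (A - R)) (norm_nonneg (B - R))]
  have hangle : EuclideanGeometry.angle A R B = Real.pi :=
    (InnerProductGeometry.inner_eq_neg_mul_norm_iff_angle_eq_pi hA hB).1 hinner
  have hsbtw := EuclideanGeometry.angle_eq_pi_iff_sbtw.1 hangle
  rw [sbtw_iff_mem_image_Ioo_and_ne] at hsbtw
  exact openSegment_eq_image_lineMap ℝ A B ▸ hsbtw.1

theorem areaForm_sub_ne_zero_of_tangent {K : Set E} (hK : Convex ℝ K) {V₁ V₂ R w : E}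
    (hR : R ∈ interior K) (hRV : R ∈ openSegment ℝ V₁ V₂) (hV₂ : V₂ ∉ interior K) {δ : ℝ → E}
    (hδ : HasDerivAt δ w 0) (hδ0 : δ 0 = V₂) (hδK : ∀ᶠ t in 𝓝 0, δ t ∈ K) (hw : w ≠ 0) :
    ω (V₂ - V₁) w ≠ 0 := by
  obtain ⟨f, hfw, hfR⟩ := hK.exists_tangent_functional hR hV₂ hδ hδ0 hδK
  obtain ⟨α, -, hα, -, -, h₂⟩ := exists_sub_eq_smul_of_mem_openSegment hRV
  have hfD : 0 < f (V₂ - V₁) := by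
    have : f V₂ - f R = α * f (V₂ - V₁) := by rw [← map_sub, h₂, map_smul, smul_eq_mul]
    exact pos_of_mul_pos_right (this ▸ sub_pos.2 hfR) hα.le
  intro h
  have hpar := o.smul_eq_inner_smul_of_areaForm_eq_zero h
  have hinner : ⟪V₂ - V₁, w⟫ = 0 := by
    have := congrArg f hpar
    rw [map_smul, map_smul, hfw, smul_zero, smul_eq_mul] at this
    exact (mul_eq_zero.1 this.symm).resolve_right hfD.ne'
  rw [hinner, zero_smul, smul_eq_zero] at hpar
  rcases hpar with hD | hw0
  · rw [sq_eq_zero_iff, norm_eq_zero] at hD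
    exact hfD.ne' (by rw [hD, map_zero])
  · exact hw hw0

theorem hasStrictFDerivAt_areaForm_sub {R u w : E} {γ δ : ℝ → E} (hγ : HasStrictDerivAt γ u 0)
    (hδ : HasStrictDerivAt δ w 0) :
    HasStrictFDerivAt (fun p : ℝ × ℝ => ω (γ p.1 - R) (δ p.2 - R))
      ((ContinuousLinearMap.snd ℝ ℝ ℝ).smulRight (ω (γ 0 - R) w) +
        (ContinuousLinearMap.fst ℝ ℝ ℝ).smulRight (ω u (δ 0 - R))) (0, 0) := by
  have h := o.areaForm'.hasStrictFDerivAt_of_bilinear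
    ((hγ.hasStrictFDerivAt.comp ((0 : ℝ), (0 : ℝ)) hasStrictFDerivAt_fst).sub_const R)
    ((hδ.hasStrictFDerivAt.comp ((0 : ℝ), (0 : ℝ)) hasStrictFDerivAt_snd).sub_const R)
  simp only [areaForm'_apply, LinearMap.coe_toContinuousLinearMap'] at h
  refine h.congr_fderiv (ContinuousLinearMap.ext fun p => ?_)
  simp [-map_sub]

theorem exists_chords_through {V₁ V₂ R u w : E} {γ δ : ℝ → E} (hR : R ∈ openSegment ℝ V₁ V₂)
    (hγ : HasStrictDerivAt γ u 0) (hγ0 : γ 0 = V₁) (hδ : HasStrictDerivAt δ w 0) (hδ0 : δ 0 = V₂)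
    (hw : ω (V₂ - V₁) w ≠ 0) :
    ∃ (s : ℝ → ℝ) (σ : ℝ), s 0 = 0 ∧ HasDerivAt s σ 0 ∧
      dist V₁ R * σ * ω (V₂ - V₁) w = dist V₂ R * ω u (V₂ - V₁) ∧
      ∀ᶠ t in 𝓝 0, R ∈ openSegment ℝ (γ t) (δ (s t)) := by
  obtain ⟨α, β, hα, hβ, h₁, h₂⟩ := exists_sub_eq_smul_of_mem_openSegment hR
  set D := V₂ - V₁
  have hD : D ≠ 0 := fun h => hw (by simp [h])
  have hG := o.hasStrictFDerivAt_areaForm_sub (R := R) hγ hδ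
  have hG0 : ω (γ 0 - R) (δ 0 - R) = 0 := by simp [hγ0, hδ0, h₁, h₂]
  rw [hγ0, hδ0, h₁, h₂] at hG
  obtain ⟨s, σ, hs0, hs, hσ, hGs⟩ := hG.exists_implicit_hasDerivAt (by simp [hβ.ne', hw])
  simp only [hG0] at hs0 hs hGs
  simp only [neg_smul, map_neg, map_smul, LinearMap.neg_apply, LinearMap.smul_apply, smul_eq_mul,
    add_apply, ContinuousLinearMap.smulRight_apply, ContinuousLinearMap.coe_snd', mul_neg,
    ContinuousLinearMap.coe_fst', one_mul] at hσ
  refine ⟨s, σ, hs0, hs, ?_, ?_⟩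
  · rw [dist_eq_norm, dist_eq_norm, h₁, h₂, norm_smul, norm_smul, norm_neg,
      Real.norm_of_nonneg hα.le, Real.norm_of_nonneg hβ.le]
    linear_combination -‖D‖ * hσ
  · have hinner : ⟪V₁ - R, V₂ - R⟫ < 0 := by
      rw [h₁, h₂, real_inner_smul_left, real_inner_smul_right, real_inner_self_eq_norm_sq]
      have := mul_pos (mul_pos hα hβ) (pow_pos (norm_pos_iff.2 hD) 2)
      linarith
    have hcont : ContinuousAt (fun t => ⟪γ t - R, δ (s t) - R⟫) 0 :=
      (hγ.hasDerivAt.continuousAt.sub continuousAt_const).inner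
        ((hδ.hasDerivAt.continuousAt.comp_of_eq hs.continuousAt hs0).sub continuousAt_const)
    have hinner_near := hcont.tendsto.eventually_lt_const (by simpa [hγ0, hs0, hδ0] using hinner)
    filter_upwards [hGs, hinner_near] with t hGt hinnert
    exact o.mem_openSegment_of_areaForm_eq_zero_of_inner_neg hGt hinnert

end Orientation

instance : Fact (Module.finrank ℝ Plane = 2) := ⟨finrank_euclideanSpace_fin⟩

theorem Fa_eq_fderiv_apply {F : ℝ → ℝ → ℝ} {x y : ℝ}
    (h : DifferentiableAt ℝ (fun p : ℝ × ℝ => F p.1 p.2) (x, y)) :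
    Fa F x y = fderiv ℝ (fun p : ℝ × ℝ => F p.1 p.2) (x, y) (1, 0) :=
  (h.hasFDerivAt.comp_hasDerivAt_of_eq x ((hasDerivAt_id x).prodMk (hasDerivAt_const x y)) rfl).deriv

theorem Fb_eq_fderiv_apply {F : ℝ → ℝ → ℝ} {x y : ℝ}
    (h : DifferentiableAt ℝ (fun p : ℝ × ℝ => F p.1 p.2) (x, y)) :
    Fb F x y = fderiv ℝ (fun p : ℝ × ℝ => F p.1 p.2) (x, y) (0, 1) :=
  (h.hasFDerivAt.comp_hasDerivAt_of_eq y ((hasDerivAt_const y x).prodMk (hasDerivAt_id y)) rfl).deriv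

theorem eventually_mem_of_image_Ioo_eq_inter {α : Type*} {γ : ℝ → α} {c U : Set α} {ε : ℝ}
    (hε : 0 < ε) (h : γ '' Ioo (-ε) ε = c ∩ U) : ∀ᶠ t in 𝓝 0, γ t ∈ c :=
  eventually_of_mem (Ioo_mem_nhds (neg_lt_zero.2 hε) hε) fun _ ht => (h ▸ mem_image_of_mem γ ht).1

theorem IsChordalPoint.chord_relation (o : Orientation ℝ Plane (Fin 2)) {F : ℝ → ℝ → ℝ}
    {K : Set Plane} {V₁ V₂ R u w : Plane} {γ δ : ℝ → Plane}
    (hch : IsChordalPoint F (frontier K) R) (hR : R ∈ openSegment ℝ V₁ V₂)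
    (hF : DifferentiableAt ℝ (fun p : ℝ × ℝ => F p.1 p.2) (dist R V₁, dist R V₂))
    (hγ : HasStrictDerivAt γ u 0) (hγ0 : γ 0 = V₁) (hγK : ∀ᶠ t in 𝓝 0, γ t ∈ frontier K)
    (hδ : HasStrictDerivAt δ w 0) (hδ0 : δ 0 = V₂) (hδK : ∀ᶠ t in 𝓝 0, δ t ∈ frontier K)
    (hw : o.areaForm (V₂ - V₁) w ≠ 0) :
    dist V₁ R * Fa F (dist R V₁) (dist R V₂) * (o.areaForm (V₂ - V₁) w * ⟪u, V₂ - V₁⟫) =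
      dist V₂ R * Fb F (dist R V₁) (dist R V₂) * (o.areaForm u (V₂ - V₁) * ⟪w, V₂ - V₁⟫) := by
  obtain ⟨s, σ, hs0, hs, hσ, hseg⟩ := o.exists_chords_through hR hγ hγ0 hδ hδ0 hw
  obtain ⟨k, hk⟩ := hch
  have hδsK : ∀ᶠ t in 𝓝 0, δ (s t) ∈ frontier K :=
    (hs.continuousAt.tendsto.mono_right (by rw [hs0])).eventually hδK
  have hconst : ∀ᶠ t in 𝓝 0, F (dist (γ t) R) (dist (δ (s t)) R) = k := by
    filter_upwards [hseg, hγK, hδsK] with t h₁ h₂ h₃ using hk _ _ h₂ h₃ h₁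
  obtain ⟨α, β, hα, hβ, h₁, h₂⟩ := exists_sub_eq_smul_of_mem_openSegment hR
  set D := V₂ - V₁
  have hD : D ≠ 0 := fun h => hw (by simp [h])
  have hr₁ := hγ.hasDerivAt.dist_const_of_sub_eq_smul hβ (neg_ne_zero.2 hD)
    (by rw [hγ0, h₁, neg_smul, smul_neg])
  have hr₂ := (hδ.hasDerivAt.scomp_of_eq 0 hs hs0.symm).dist_const_of_sub_eq_smul hα hD
    (by rw [Function.comp_apply, hs0, hδ0, h₂])
  have hFt := hF.hasFDerivAt.comp_hasDerivAt_of_eq 0 (hr₁.prodMk hr₂)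
    (by simp [hγ0, hs0, hδ0, dist_comm])
  have h0 := hFt.unique ((hasDerivAt_const 0 k).congr_of_eventuallyEq hconst)
  rw [Fa_eq_fderiv_apply hF, Fb_eq_fderiv_apply hF, real_inner_comm D u, real_inner_comm D w]
  set L := fderiv ℝ (fun p : ℝ × ℝ => F p.1 p.2) (dist R V₁, dist R V₂)
  have hL : ∀ a b : ℝ, L (a, b) = a * L (1, 0) + b * L (0, 1) := fun a b => by
    rw [show ((a, b) : ℝ × ℝ) = a • (1, 0) + b • (0, 1) by simp, map_add, map_smul, map_smul,
      smul_eq_mul, smul_eq_mul]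
  rw [hL, inner_neg_left, norm_neg, real_inner_smul_right] at h0
  field_simp [norm_ne_zero_iff.2 hD] at h0
  linear_combination -(dist V₁ R * o.areaForm D w) * h0 + ⟪D, w⟫ * L (0, 1) * hσ

theorem tangent_at_vertex_perpendicular_general
    (V₁ P Q V₂ : Plane)
    (hne : V₁ ≠ P ∧ V₁ ≠ Q ∧ V₁ ≠ V₂ ∧ P ≠ Q ∧ P ≠ V₂ ∧ Q ≠ V₂)
    (hPseg : P ∈ openSegment ℝ V₁ Q) (hQseg : Q ∈ openSegment ℝ P V₂)
    (F : ℝ → ℝ → ℝ)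
    (hsmooth : ContDiffOn ℝ (⊤ : ℕ∞) (fun p : ℝ × ℝ => F p.1 p.2) (Ici 0 ×ˢ Ici 0))
    (hb2 : Fb F (dist Q V₁) (dist Q V₂) ≠ 0)
    (ha1 : Fa F (dist P V₁) (dist P V₂) ≠ 0)
    (hiv : ∀ n : ℕ,
      ((Fa F (dist Q V₁) (dist Q V₂) * Fb F (dist P V₁) (dist P V₂)) /
       (Fa F (dist P V₁) (dist P V₂) * Fb F (dist Q V₁) (dist Q V₂))) ^ n ≠
      (dist V₂ Q * dist V₁ P) / (dist V₂ P * dist V₁ Q))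
    (K : Set Plane)
    (hK : IsAnalyticSolution F P Q V₁ V₂ K)
    (ε : ℝ) (hε : 0 < ε) (γ : ℝ → Plane)
    (hγ : AnalyticOnNhd ℝ γ (Ioo (-ε) ε)) (hγ0 : γ 0 = V₁)
    (hγim : ∃ U : Set Plane, IsOpen U ∧ V₁ ∈ U ∧ γ '' Ioo (-ε) ε = frontier K ∩ U) :
    (inner ℝ (deriv γ 0) (V₂ - V₁) : ℝ) = 0 := by
  obtain ⟨hKc, hKconv, -, hPint, -, hchP, hchQ, haxis, hbdry⟩ := hK
  obtain ⟨hV₁P, hV₁Q, -, -, hPV₂, hQV₂⟩ := hne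
  obtain ⟨hP, hQ⟩ := mem_openSegment_trans_expand hPseg hQseg hV₁Q hPV₂
  have hV₂ : V₂ ∈ frontier K := (haxis.symm.subset (by simp)).2
  obtain ⟨ε₂, hε₂, δ, hδ, hδ0, hδ', U, -, -, hδim⟩ := hbdry V₂ hV₂
  obtain ⟨U', -, -, hγim⟩ := hγim
  have hγK := eventually_mem_of_image_Ioo_eq_inter hε hγim
  have hδK := eventually_mem_of_image_Ioo_eq_inter hε₂ hδim
  have hγs := (hγ 0 ⟨neg_lt_zero.2 hε, hε⟩).hasStrictDerivAt
  have hδs := (hδ 0 ⟨neg_lt_zero.2 hε₂, hε₂⟩).hasStrictDerivAt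
  set o : Orientation ℝ Plane (Fin 2) := (EuclideanSpace.basisFun (Fin 2) ℝ).toBasis.orientation
  have hw := o.areaForm_sub_ne_zero_of_tangent hKconv hPint hP hV₂.2 hδs.hasDerivAt hδ0
    (hδK.mono fun _ ht => hKc.isClosed.frontier_subset ht) hδ'
  have hFdiff : ∀ x y : ℝ, 0 < x → 0 < y → DifferentiableAt ℝ (fun p : ℝ × ℝ => F p.1 p.2) (x, y) :=
    fun x y hx hy =>
      (hsmooth.contDiffAt (prod_mem_nhds (Ici_mem_nhds hx) (Ici_mem_nhds hy))).differentiableAt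
        (by simp)
  have eqP := hchP.chord_relation o hP (hFdiff _ _ (dist_pos.2 hV₁P.symm) (dist_pos.2 hPV₂))
    hγs hγ0 hγK hδs hδ0 hδK hw
  have eqQ := hchQ.chord_relation o hQ (hFdiff _ _ (dist_pos.2 hV₁Q.symm) (dist_pos.2 hQV₂))
    hγs hγ0 hγK hδs hδ0 hδK hw
  by_contra hX
  apply hiv 1
  rw [pow_one, div_eq_div_iff (mul_ne_zero ha1 hb2)
    (mul_ne_zero (dist_ne_zero.2 hPV₂.symm) (dist_ne_zero.2 hV₁Q))]
  refine mul_right_cancel₀ (mul_ne_zero hw hX) ?_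
  linear_combination Fb F (dist P V₁) (dist P V₂) * dist V₂ P * eqQ -
    dist V₂ Q * Fb F (dist Q V₁) (dist Q V₂) * eqP

/-- For an analytic solution of the interior `F`-chordal problem, the tangent line of
the boundary curve at the vertex `V₁` is perpendicular to the axis. -/
theorem tangent_at_vertex_perpendicular
    (V₁ P Q V₂ : Plane)
    (hne : V₁ ≠ P ∧ V₁ ≠ Q ∧ V₁ ≠ V₂ ∧ P ≠ Q ∧ P ≠ V₂ ∧ Q ≠ V₂)
    (hcol : Collinear ℝ ({V₁, P, Q, V₂} : Set Plane))
    (hPseg : P ∈ openSegment ℝ V₁ Q) (hQseg : Q ∈ openSegment ℝ P V₂)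
    (F : ℝ → ℝ → ℝ)
    (hsymm : ∀ a b : ℝ, 0 ≤ a → 0 ≤ b → F a b = F b a)
    (hsmooth : ContDiffOn ℝ (⊤ : ℕ∞) (fun p : ℝ × ℝ => F p.1 p.2) (Ici 0 ×ˢ Ici 0))
    (hb1 : Fb F (dist P V₁) (dist P V₂) ≠ 0)
    (hb2 : Fb F (dist Q V₁) (dist Q V₂) ≠ 0)
    (ha1 : Fa F (dist P V₁) (dist P V₂) ≠ 0)
    (ha2 : Fa F (dist Q V₁) (dist Q V₂) ≠ 0)
    (hiv : ∀ n : ℕ,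
      ((Fa F (dist Q V₁) (dist Q V₂) * Fb F (dist P V₁) (dist P V₂)) /
       (Fa F (dist P V₁) (dist P V₂) * Fb F (dist Q V₁) (dist Q V₂))) ^ n ≠
      (dist V₂ Q * dist V₁ P) / (dist V₂ P * dist V₁ Q))
    (K : Set Plane)
    (hK : IsAnalyticSolution F P Q V₁ V₂ K)
    (ε : ℝ) (hε : 0 < ε) (γ : ℝ → Plane)
    (hγ : AnalyticOnNhd ℝ γ (Ioo (-ε) ε)) (hγ0 : γ 0 = V₁) (hγ' : deriv γ 0 ≠ 0)
    (hγim : ∃ U : Set Plane, IsOpen U ∧ V₁ ∈ U ∧ γ '' Ioo (-ε) ε = frontier K ∩ U) :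
    (inner ℝ (deriv γ 0) (V₂ - V₁) : ℝ) = 0 :=
  tangent_at_vertex_perpendicular_general V₁ P Q V₂ hne hPseg hQseg F hsmooth hb2 ha1 hiv K hK ε hε
    γ hγ hγ0 hγim
end
end

section
/- First Fundamental Theorem of Riordan Matrices: let d, f be formal power series over ℝ and let h be a formal power series over ℝ with zero constant coefficient, and let f ∘ h denote the formal substitution of h into f. Then for every natural number n, the n-th coefficient of d·(f ∘ h) equals the finite sum Σ_{j=0}^{n} [t^n](d·h^j) · [t^j]f, where [t^i]g denotes the i-th coefficient of the power series g. Equivalently, multiplying the generalized Riordan matrix R(d,h) = ([t^i](d·h^j))_{i,j≥0} by the column vector of coefficients of f yields the column vector of coefficients of d·(f ∘ h). -/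
/-! Since `h` has zero constant coefficient, `h ^ j` vanishes to order `j`, so up to degree `n`
the series `f ∘ h` agrees with the polynomial `∑_{j ≤ n} [t^j]f · h ^ j`. The `n`-th coefficient
of `d · g` only sees `g` up to degree `n`, and the theorem is linearity of
`g ↦ [t^n](d · g)` applied to that polynomial. -/

open PowerSeries

noncomputable section

/-- Formal composition (substitution) `f ∘ h` of formal power series: for `h` with zero
constant coefficient, the `n`-th coefficient of `f ∘ h` is
`Σ_{j=0}^{n} [t^j]f · [t^n](h^j)` (the terms with `j > n` vanish since
`[t^n](h^j) = 0` for `j > n`). -/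
def PowerSeries.compSubst (f h : PowerSeries ℝ) : PowerSeries ℝ :=
  PowerSeries.mk fun n =>
    ∑ j ∈ Finset.range (n + 1), PowerSeries.coeff (R := ℝ) j f * PowerSeries.coeff (R := ℝ) n (h ^ j)

open Finset

namespace PowerSeries

theorem coeff_pow_eq_zero_of_lt {R : Type*} [CommSemiring R] {h : R⟦X⟧}
    (hh : constantCoeff h = 0) {m j : ℕ} (hmj : m < j) : coeff m (h ^ j) = 0 :=
  X_pow_dvd_iff.mp (pow_dvd_pow_of_dvd (X_dvd_iff.mpr hh) j) m hmj

theorem coeff_mul_congr_right {R : Type*} [Semiring R] (d : R⟦X⟧) {g g' : R⟦X⟧} {n : ℕ}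
    (hg : ∀ m ≤ n, coeff m g = coeff m g') : coeff n (d * g) = coeff n (d * g') := by
  rw [coeff_mul, coeff_mul]
  exact sum_congr rfl fun p hp => by rw [hg p.2 (HasAntidiagonal.antidiagonal.snd_le hp)]

theorem coeff_compSubst_of_le {f h : ℝ⟦X⟧} (hh : constantCoeff h = 0) {m N : ℕ} (hmN : m ≤ N) :
    coeff m (f.compSubst h) = coeff m (∑ j ∈ range (N + 1), C (coeff j f) * h ^ j) := by
  rw [compSubst, coeff_mk, map_sum]
  simp only [coeff_C_mul]
  refine sum_subset (range_subset_range.mpr (by omega)) fun j _ hj => ?_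
  rw [coeff_pow_eq_zero_of_lt hh (by simpa using hj), mul_zero]

end PowerSeries

/-- First Fundamental Theorem of Riordan Matrices: the `n`-th coefficient of
`d·(f ∘ h)` is `Σ_{j=0}^{n} [t^n](d·h^j) · [t^j]f`, i.e. the generalized Riordan
matrix `R(d,h)` maps the coefficient vector of `f` to that of `d·(f ∘ h)`. -/
theorem first_fundamental_theorem_of_riordan_matrices
    (d f h : PowerSeries ℝ) (hh : PowerSeries.constantCoeff (R := ℝ) h = 0) (n : ℕ) :
    PowerSeries.coeff (R := ℝ) n (d * f.compSubst h) =
      ∑ j ∈ Finset.range (n + 1),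
        PowerSeries.coeff (R := ℝ) n (d * h ^ j) * PowerSeries.coeff (R := ℝ) j f := by
  rw [coeff_mul_congr_right d fun m hm => coeff_compSubst_of_le (f := f) hh hm, mul_sum, map_sum]
  refine sum_congr rfl fun j _ => ?_
  rw [mul_left_comm, coeff_C_mul, mul_comm]
end
end

section
/- Riordan-matrix characterization of geometric continuity of order n at a vertex: let n ≥ 1 and let x_l, y_l, x_r, y_r : ℝ → ℝ be functions of class C^n with x_l(0) = x_r(0) and y_l(0) = y_r(0). Then the following are equivalent. (a) There exists a C^n function u : ℝ → ℝ with u(0) = 0 and u′(0) ≠ 0 such that for every i ≤ n the i-th derivative at 0 of x_l ∘ u equals the i-th derivative at 0 of x_r, and the i-th derivative at 0 of y_l ∘ u equals the i-th derivative at 0 of y_r. (b) There exist real numbers u₁, u₂, …, u_n with u₁ ≠ 0 such that, setting U(t) = u₁t + u₂t² + ⋯ + u_n tⁿ, for every i ≤ n one has Σ_{j=0}^{i} [t^i](U^j) · (x_l^{(j)}(0)/j!) = x_r^{(i)}(0)/i! and Σ_{j=0}^{i} [t^i](U^j) · (y_l^{(j)}(0)/j!) = y_r^{(i)}(0)/i!,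 i.e. the partial Riordan matrix R_n(1,U) maps the vector of Taylor coefficients of (x_l, y_l) at 0 to the vector of Taylor coefficients of (x_r, y_r) at 0. -/
/-!
Composing the Peano expansions `f = Q + o(xⁿ)` and `u = U + o(xⁿ)`, where `Q`, `U` are the
Taylor polynomials at `0` and `u 0 = 0`, gives `f ∘ u = Q ∘ U + o(xⁿ)`. Since an `o(xⁿ)`
expansion by a polynomial determines the first `n` Taylor coefficients, those of `f ∘ u` are
`[tⁱ](Q ∘ U) = ∑ⱼ [tⁱ](Uʲ) [tʲ]Q`, the sum stopping at `j = i` because `X ∣ U`. This turns (a)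
into (b) with `U` the Taylor polynomial of `u`; conversely a polynomial of degree at most `n` is
its own Taylor polynomial, so `u := U` realises (b).
-/

open Polynomial Filter Asymptotics Topology Finset

namespace Polynomial

theorem coeff_sum_C_mul_X_pow {R : Type*} [Semiring R] (s : Finset ℕ) (v : ℕ → R) (k : ℕ) :
    (∑ i ∈ s, C (v i) * X ^ i).coeff k = if k ∈ s then v k else 0 := by
  simp only [finsetSum_coeff, coeff_C_mul_X_pow]
  exact Finset.sum_ite_eq s k v

theorem coeff_pow_eq_zero_of_lt {R : Type*} [CommSemiring R] {q : R[X]} (hq : q.coeff 0 = 0)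
    {i j : ℕ} (hij : i < j) : (q ^ j).coeff i = 0 :=
  X_pow_dvd_iff.mp (pow_dvd_pow_of_dvd (X_dvd_iff.mpr hq) j) i hij

theorem coeff_comp_eq_sum_range {R : Type*} [CommSemiring R] (p : R[X]) {q : R[X]}
    (hq : q.coeff 0 = 0) (i : ℕ) :
    (p.comp q).coeff i = ∑ j ∈ range (i + 1), (q ^ j).coeff i * p.coeff j := by
  have hsum : p.comp q = ∑ j ∈ range (p.natDegree + i + 1), C (p.coeff j) * q ^ j := by
    rw [comp_eq_sum_left, sum_over_range' p (by simp) (p.natDegree + i + 1) (by omega)]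
  rw [hsum, finsetSum_coeff,
    ← Finset.sum_subset (range_subset_range.mpr (by omega : i + 1 ≤ p.natDegree + i + 1))]
  · exact Finset.sum_congr rfl fun j _ => by rw [coeff_C_mul, mul_comm]
  · intro j _ hji
    rw [mem_range, not_lt] at hji
    rw [coeff_C_mul, coeff_pow_eq_zero_of_lt hq (by omega), mul_zero]

theorem contDiff_eval {𝕜 : Type*} [NontriviallyNormedField 𝕜] (p : 𝕜[X]) (n : WithTop ℕ∞) :
    ContDiff 𝕜 n (fun x => p.eval x) :=
  p.contDiff_aeval n

theorem coeff_eq_zero_of_isLittleO_pow {p : ℝ[X]} {n : ℕ}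
    (h : (fun x => p.eval x) =o[𝓝[≠] 0] (· ^ n)) {i : ℕ} (hi : i ≤ n) : p.coeff i = 0 := by
  have hcoeff_zero : ∀ {p : ℝ[X]} {n : ℕ}, (fun x => p.eval x) =o[𝓝[≠] 0] (· ^ n) →
      p.coeff 0 = 0 := fun {p n} h => by
    have hpow : (· ^ n : ℝ → ℝ) =O[𝓝[≠] 0] (fun _ => (1 : ℝ)) :=
      (((continuous_pow n).tendsto 0).isBigO_one ℝ).mono nhdsWithin_le_nhds
    have hlim : Tendsto (fun x => p.eval x) (𝓝[≠] 0) (𝓝 0) :=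
      (isLittleO_one_iff ℝ).mp (h.trans_isBigO hpow)
    rw [coeff_zero_eq_eval_zero]
    exact tendsto_nhds_unique (p.continuous.continuousAt.tendsto.mono_left nhdsWithin_le_nhds) hlim
  induction n generalizing p i with
  | zero => exact Nat.le_zero.mp hi ▸ hcoeff_zero h
  | succ n ih =>
    rcases i with _ | i
    · exact hcoeff_zero h
    rw [← coeff_divX]
    refine ih ?_ (by omega)
    have hX : ∀ x, p.eval x = x * (divX p).eval x := fun x => by
      conv_lhs => rw [← X_mul_divX_add p, hcoeff_zero h]
      simp
    refine ((isBigO_refl (fun x : ℝ => x⁻¹) _).mul_isLittleO h).congr' ?_ ?_ <;>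
      filter_upwards [self_mem_nhdsWithin] with x (hx : x ≠ 0)
    · simp [hX, hx]
    · simp [pow_succ', hx]

end Polynomial

theorem Asymptotics.IsLittleO.comp_sub_comp {α E F G : Type*} [NormedAddCommGroup E]
    [NormedSpace ℝ E] [NormedAddCommGroup F] [NormedSpace ℝ F] [Norm G] {l : Filter α}
    {g : E → F} {y₀ : E} (hg : ContDiffAt ℝ 1 g y₀) {a b : α → E} {w : α → G}
    (ha : Tendsto a l (𝓝 y₀)) (hb : Tendsto b l (𝓝 y₀)) (hab : (fun x => a x - b x) =o[l] w) :
    (fun x => g (a x) - g (b x)) =o[l] w := by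
  obtain ⟨K, t, ht, hK⟩ := hg.exists_lipschitzOnWith
  refine IsBigO.trans_isLittleO (IsBigO.of_bound K ?_) hab
  filter_upwards [ha ht, hb ht] with x hax hbx
  exact hK.norm_sub_le hax hbx

noncomputable def taylorPoly (f : ℝ → ℝ) (n : ℕ) : ℝ[X] :=
  ∑ k ∈ range (n + 1), C (iteratedDeriv k f 0 / k.factorial) * X ^ k

theorem taylorPoly_coeff (f : ℝ → ℝ) (n k : ℕ) :
    (taylorPoly f n).coeff k = if k ≤ n then iteratedDeriv k f 0 / k.factorial else 0 := by
  simp [taylorPoly]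

theorem taylorPoly_eq_sum_Icc {f : ℝ → ℝ} (hf : f 0 = 0) (n : ℕ) :
    taylorPoly f n = ∑ k ∈ Icc 1 n, C (iteratedDeriv k f 0 / k.factorial) * X ^ k := by
  ext k
  simp only [taylorPoly_coeff, coeff_sum_C_mul_X_pow, mem_Icc]
  rcases k with _ | k
  · simp [hf]
  · simp

theorem isLittleO_sub_taylorPoly {f : ℝ → ℝ} {n : ℕ} (hf : ContDiff ℝ n f) :
    (fun x => f x - (taylorPoly f n).eval x) =o[𝓝 0] (· ^ n) := by
  have h := taylor_isLittleO_univ (x₀ := 0) hf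
  simp only [sub_zero] at h
  refine h.congr_left fun x => ?_
  simp [taylor_within_apply, taylorPoly, eval_finsetSum, iteratedDerivWithin_univ, div_eq_inv_mul,
    mul_comm, mul_assoc]

theorem iteratedDeriv_div_factorial_eq_coeff_of_isLittleO {g : ℝ → ℝ} {S : ℝ[X]} {n : ℕ}
    (hg : ContDiff ℝ n g) (h : (fun x => g x - S.eval x) =o[𝓝 0] (· ^ n)) {i : ℕ} (hi : i ≤ n) :
    iteratedDeriv i g 0 / i.factorial = S.coeff i := by
  have hdiff : (fun x => (taylorPoly g n - S).eval x) =o[𝓝[≠] 0] (· ^ n) :=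
    ((h.sub (isLittleO_sub_taylorPoly hg)).congr_left fun x => by simp).mono nhdsWithin_le_nhds
  have := coeff_eq_zero_of_isLittleO_pow hdiff hi
  rwa [coeff_sub, sub_eq_zero, taylorPoly_coeff, if_pos hi] at this

theorem taylorPoly_eval_of_natDegree_le {S : ℝ[X]} {n : ℕ} (hS : S.natDegree ≤ n) :
    taylorPoly (fun x => S.eval x) n = S := by
  ext k
  by_cases hk : k ≤ n
  · rw [taylorPoly_coeff, if_pos hk]
    exact iteratedDeriv_div_factorial_eq_coeff_of_isLittleO (S.contDiff_eval n) (by simp) hk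
  · rw [taylorPoly_coeff, if_neg hk, coeff_eq_zero_of_natDegree_lt (by omega)]

theorem taylorPoly_coeff_zero {f : ℝ → ℝ} (hf : f 0 = 0) (n : ℕ) :
    (taylorPoly f n).coeff 0 = 0 := by
  simp [taylorPoly_coeff, hf]

theorem isLittleO_comp_sub_taylorPoly_comp {f u : ℝ → ℝ} {n : ℕ} (hn : 1 ≤ n)
    (hf : ContDiff ℝ n f) (hu : ContDiff ℝ n u) (hu0 : u 0 = 0) :
    (fun x => f (u x) - ((taylorPoly f n).comp (taylorPoly u n)).eval x) =o[𝓝 0] (· ^ n) := by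
  set P := taylorPoly u n
  set Q := taylorPoly f n
  have hu_lim : Tendsto u (𝓝 0) (𝓝 0) := by
    simpa [hu0] using hu.continuous.tendsto 0
  have hP_lim : Tendsto (fun x => P.eval x) (𝓝 0) (𝓝 0) := by
    simpa [← coeff_zero_eq_eval_zero, P, taylorPoly_coeff_zero hu0] using P.continuous.tendsto 0
  have hu_bigO : u =O[𝓝 0] (fun x => x) := by
    simpa [hu0] using ((hu.differentiable (by norm_num; omega)) 0).hasFDerivAt.isBigO_sub
  have hf_u : (fun x => f (u x) - Q.eval (u x)) =o[𝓝 0] (· ^ n) :=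
    ((isLittleO_sub_taylorPoly hf).comp_tendsto hu_lim).trans_isBigO (hu_bigO.pow n)
  have hQ_uP : (fun x => Q.eval (u x) - Q.eval (P.eval x)) =o[𝓝 0] (· ^ n) :=
    (isLittleO_sub_taylorPoly hu).comp_sub_comp (Q.contDiff_eval 1).contDiffAt hu_lim hP_lim
  exact (hf_u.add hQ_uP).congr_left fun x => by simp [eval_comp]

theorem iteratedDeriv_comp_div_factorial_eq_sum {f u : ℝ → ℝ} {n : ℕ} (hn : 1 ≤ n)
    (hf : ContDiff ℝ n f) (hu : ContDiff ℝ n u) (hu0 : u 0 = 0) {i : ℕ} (hi : i ≤ n) :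
    iteratedDeriv i (f ∘ u) 0 / i.factorial =
      ∑ j ∈ range (i + 1), (taylorPoly u n ^ j).coeff i * (iteratedDeriv j f 0 / j.factorial) := by
  rw [iteratedDeriv_div_factorial_eq_coeff_of_isLittleO (g := f ∘ u) (hf.comp hu)
      (isLittleO_comp_sub_taylorPoly_comp (f := f) hn hf hu hu0) hi,
    coeff_comp_eq_sum_range _ (taylorPoly_coeff_zero hu0 n)]
  refine sum_congr rfl fun j hj => ?_
  rw [taylorPoly_coeff, if_pos (by rw [mem_range] at hj; omega)]

theorem geometric_continuity_iff_riordan_general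
    (n : ℕ) (hn : 1 ≤ n)
    (xl yl xr yr : ℝ → ℝ)
    (hxl : ContDiff ℝ n xl) (hyl : ContDiff ℝ n yl) :
    (∃ u : ℝ → ℝ, ContDiff ℝ n u ∧ u 0 = 0 ∧ deriv u 0 ≠ 0 ∧
      ∀ i ≤ n, iteratedDeriv i (xl ∘ u) 0 = iteratedDeriv i xr 0 ∧
               iteratedDeriv i (yl ∘ u) 0 = iteratedDeriv i yr 0) ↔
    (∃ u : ℕ → ℝ, u 1 ≠ 0 ∧
      ∀ i ≤ n,
        (∑ j ∈ Finset.range (i + 1),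
            ((∑ k ∈ Finset.Icc 1 n, Polynomial.C (u k) * Polynomial.X ^ k) ^ j).coeff i *
              (iteratedDeriv j xl 0 / (Nat.factorial j : ℝ)) =
          iteratedDeriv i xr 0 / (Nat.factorial i : ℝ)) ∧
        (∑ j ∈ Finset.range (i + 1),
            ((∑ k ∈ Finset.Icc 1 n, Polynomial.C (u k) * Polynomial.X ^ k) ^ j).coeff i *
              (iteratedDeriv j yl 0 / (Nat.factorial j : ℝ)) =
          iteratedDeriv i yr 0 / (Nat.factorial i : ℝ))) := by
  constructor
  · rintro ⟨u, hu, hu0, hu1, hmatch⟩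
    refine ⟨fun k => iteratedDeriv k u 0 / k.factorial, by simpa using hu1, fun i hi => ?_⟩
    rw [← taylorPoly_eq_sum_Icc hu0, ← iteratedDeriv_comp_div_factorial_eq_sum hn hxl hu hu0 hi,
      ← iteratedDeriv_comp_div_factorial_eq_sum hn hyl hu hu0 hi, (hmatch i hi).1, (hmatch i hi).2]
    exact ⟨rfl, rfl⟩
  · rintro ⟨v, hv1, hmatch⟩
    set U := ∑ k ∈ Icc 1 n, C (v k) * X ^ k
    have hU : taylorPoly (fun x => U.eval x) n = U :=
      taylorPoly_eval_of_natDegree_le (natDegree_sum_le_of_forall_le _ _ fun k hk =>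
        (natDegree_C_mul_X_pow_le _ _).trans (mem_Icc.mp hk).2)
    have hU0 : U.eval 0 = 0 := by
      simp [← coeff_zero_eq_eval_zero, U]
    have hU1 : deriv (fun x => U.eval x) 0 = v 1 := by
      simp [Polynomial.deriv, ← coeff_zero_eq_eval_zero, coeff_derivative, U, hn]
    have hfac : ∀ i : ℕ, (i.factorial : ℝ) ≠ 0 := fun i => mod_cast i.factorial_ne_zero
    refine ⟨fun x => U.eval x, U.contDiff_eval n, hU0, hU1 ▸ hv1, fun i hi => ⟨?_, ?_⟩⟩
    · rw [← div_left_inj' (hfac i),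
        iteratedDeriv_comp_div_factorial_eq_sum hn hxl (U.contDiff_eval n) hU0 hi, hU]
      exact (hmatch i hi).1
    · rw [← div_left_inj' (hfac i),
        iteratedDeriv_comp_div_factorial_eq_sum hn hyl (U.contDiff_eval n) hU0 hi, hU]
      exact (hmatch i hi).2

/-- Riordan-matrix characterization of geometric continuity of order `n` at a vertex:
the existence of a regular `C^n` reparametrization `u` matching the first `n`
derivatives of the two branches at `0` is equivalent to the existence of a partial
Riordan matrix `R_n(1, U)`, `U(t) = u₁t + ⋯ + u_n tⁿ` with `u₁ ≠ 0`, mapping the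
Taylor coefficients of the left branch to those of the right branch. -/
theorem geometric_continuity_iff_riordan
    (n : ℕ) (hn : 1 ≤ n)
    (xl yl xr yr : ℝ → ℝ)
    (hxl : ContDiff ℝ n xl) (hyl : ContDiff ℝ n yl)
    (hxr : ContDiff ℝ n xr) (hyr : ContDiff ℝ n yr)
    (hx0 : xl 0 = xr 0) (hy0 : yl 0 = yr 0) :
    (∃ u : ℝ → ℝ, ContDiff ℝ n u ∧ u 0 = 0 ∧ deriv u 0 ≠ 0 ∧
      ∀ i ≤ n, iteratedDeriv i (xl ∘ u) 0 = iteratedDeriv i xr 0 ∧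
               iteratedDeriv i (yl ∘ u) 0 = iteratedDeriv i yr 0) ↔
    (∃ u : ℕ → ℝ, u 1 ≠ 0 ∧
      ∀ i ≤ n,
        (∑ j ∈ Finset.range (i + 1),
            ((∑ k ∈ Finset.Icc 1 n, Polynomial.C (u k) * Polynomial.X ^ k) ^ j).coeff i *
              (iteratedDeriv j xl 0 / (Nat.factorial j : ℝ)) =
          iteratedDeriv i xr 0 / (Nat.factorial i : ℝ)) ∧
        (∑ j ∈ Finset.range (i + 1),
            ((∑ k ∈ Finset.Icc 1 n, Polynomial.C (u k) * Polynomial.X ^ k) ^ j).coeff i *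
              (iteratedDeriv j yl 0 / (Nat.factorial j : ℝ)) =
          iteratedDeriv i yr 0 / (Nat.factorial i : ℝ))) :=
  geometric_continuity_iff_riordan_general n hn xl yl xr yr hxl hyl
end
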